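/- arXiv:2404.18762 — 4 statements merged into one kernel-verified Lean document; each statement's English description precedes it below -/
import Mathlib

section
/- Let X be a geodesic metric space and U ⊆ X a nonempty closed C-contracting subset, i.e. for any geodesic segment γ with d(γ, U) ≥ C the projection π_U(γ) has diameter at most C. Then for any y, z ∈ X, diam(π_U(y) ∪ π_U(z)) ≤ d(y,z) + 4C, i.e. nearest-point projection to U is coarsely 1-Lipschitz. -/
open Metric Set Filter

/-- The nearest-point projection set of `x` to `U`. -/
def projSet {X : Type*} [MetricSpace X] (x : X) (U : Set X) : Set X :=
  {y ∈ U | dist x y = Metric.infDist x U}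

/-- `γ` is a geodesic parametrized (by arclength) on the interval `[a,b]`. -/
def IsGeodesicOn {X : Type*} [MetricSpace X] (γ : ℝ → X) (a b : ℝ) : Prop :=
  ∀ s ∈ Set.Icc a b, ∀ t ∈ Set.Icc a b, dist (γ s) (γ t) = |s - t|

/-- `γ` is a geodesic ray parametrized on `[0,∞)`. -/
def IsGeodesicRay {X : Type*} [MetricSpace X] (γ : ℝ → X) : Prop :=
  ∀ s t : ℝ, 0 ≤ s → 0 ≤ t → dist (γ s) (γ t) = |s - t|

/-- `U` is a `C`-contracting subset: any geodesic at distance `≥ C` from `U`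
projects to a set of diameter `≤ C`. -/
def IsContracting {X : Type*} [MetricSpace X] (C : ℝ) (U : Set X) : Prop :=
  ∀ (γ : ℝ → X) (a b : ℝ), a ≤ b → IsGeodesicOn γ a b →
    (∀ s ∈ Set.Icc a b, C ≤ Metric.infDist (γ s) U) →
    Metric.diam (⋃ s ∈ Set.Icc a b, projSet (γ s) U) ≤ C

/-- `X` is a geodesic metric space. -/
def IsGeodesicSpace (X : Type*) [MetricSpace X] : Prop :=
  ∀ x y : X, ∃ γ : ℝ → X, γ 0 = x ∧ γ (dist x y) = y ∧ IsGeodesicOn γ 0 (dist x y)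

lemma projSet_nonempty {X : Type*} [MetricSpace X] [ProperSpace X]
    {U : Set X} (hU : IsClosed U) (hUne : U.Nonempty) (x : X) :
    (projSet x U).Nonempty := by
  obtain ⟨y, hy, hdy⟩ := hU.exists_infDist_eq_dist hUne x
  exact ⟨y, hy, hdy.symm⟩

/-- On a geodesic staying at distance ≥ C from U, projections of the two endpoints
are at distance ≤ C. -/
lemma proj_close {X : Type*} [MetricSpace X] [ProperSpace X]
    {U : Set X} {C : ℝ} (hcontr : IsContracting C U)
    {γ : ℝ → X} {a b : ℝ} (hab : a ≤ b) (hg : IsGeodesicOn γ a b)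
    (hge : ∀ s ∈ Set.Icc a b, C ≤ Metric.infDist (γ s) U)
    {p r : X} (hp : p ∈ projSet (γ a) U) (hr : r ∈ projSet (γ b) U) :
    dist p r ≤ C := by
  have hdiam : Metric.diam (⋃ s ∈ Set.Icc a b, projSet (γ s) U) ≤ C :=
    hcontr γ a b hab hg hge
  have haI : a ∈ Set.Icc a b := ⟨le_refl a, hab⟩
  have hbI : b ∈ Set.Icc a b := ⟨hab, le_refl b⟩
  have hpT : p ∈ ⋃ s ∈ Set.Icc a b, projSet (γ s) U := Set.mem_biUnion haI hp
  have hrT : r ∈ ⋃ s ∈ Set.Icc a b, projSet (γ s) U := Set.mem_biUnion hbI hr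
  have hbd : Bornology.IsBounded (⋃ s ∈ Set.Icc a b, projSet (γ s) U) := by
    apply (Metric.isBounded_closedBall
      (x := γ a) (r := Metric.infDist (γ a) U + 2 * (b - a))).subset
    rintro w hw
    obtain ⟨s, hs, hw⟩ := Set.mem_iUnion₂.1 hw
    have h1 : dist w (γ s) = Metric.infDist (γ s) U := by
      rw [dist_comm]; exact hw.2
    have h2 : Metric.infDist (γ s) U ≤ Metric.infDist (γ a) U + dist (γ s) (γ a) :=
      Metric.infDist_le_infDist_add_dist
    have h3 : dist (γ s) (γ a) = s - a := by
      rw [hg s hs a haI, abs_of_nonneg (by linarith [hs.1])]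
    have h4 : dist w (γ a) ≤ dist w (γ s) + dist (γ s) (γ a) := dist_triangle _ _ _
    simp only [Metric.mem_closedBall]
    have hsb := hs.2
    rw [h3] at h2 h4
    rw [h1] at h4
    linarith
  calc dist p r ≤ Metric.diam (⋃ s ∈ Set.Icc a b, projSet (γ s) U) :=
        Metric.dist_le_diam_of_mem hbd hpT hrT
    _ ≤ C := hdiam

lemma key_lemma {X : Type*} [MetricSpace X] [ProperSpace X]
    (hgeo : IsGeodesicSpace X)
    (U : Set X) (hU : IsClosed U) (hUne : U.Nonempty)
    (C : ℝ) (hC : 0 ≤ C) (hcontr : IsContracting C U)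
    (y z p q : X) (hp : p ∈ projSet y U) (hq : q ∈ projSet z U) :
    dist p q ≤ dist y z + 4 * C := by
  obtain ⟨γ, hγ0, hγL, hg⟩ := hgeo y z
  set L := dist y z with hL
  have hL0 : 0 ≤ L := dist_nonneg
  set f : ℝ → ℝ := fun s => Metric.infDist (γ s) U with hf
  have hflip : ∀ s ∈ Set.Icc 0 L, ∀ t ∈ Set.Icc 0 L, f s ≤ f t + |s - t| := by
    intro s hs t ht
    have h := Metric.infDist_le_infDist_add_dist (x := γ s) (y := γ t) (s := U)
    rwa [hg s hs t ht] at h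
  set S := {s ∈ Set.Icc 0 L | f s ≤ C} with hS
  by_cases hSne : S.Nonempty
  · have hγcont : ContinuousOn γ (Set.Icc 0 L) := by
      apply LipschitzOnWith.continuousOn (K := 1)
      apply LipschitzOnWith.of_dist_le_mul
      intro s hs t ht
      rw [hg s hs t ht, Real.dist_eq, NNReal.coe_one, one_mul]
    have hfcont : ContinuousOn f (Set.Icc 0 L) :=
      (Metric.continuous_infDist_pt U).comp_continuousOn hγcont
    have hSclosed : IsClosed S := by
      have hSeq : S = Set.Icc 0 L ∩ f ⁻¹' Set.Iic C := by
        ext s; simp [hS, Set.mem_sep_iff]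
      rw [hSeq]
      exact hfcont.preimage_isClosed_of_isClosed isClosed_Icc isClosed_Iic
    have hScomp : IsCompact S :=
      (isCompact_Icc (a := (0:ℝ)) (b := L)).of_isClosed_subset hSclosed
        (fun s hs => hs.1)
    obtain ⟨a, haS, haInf⟩ : ∃ a, a ∈ S ∧ ∀ s ∈ S, a ≤ s :=
      ⟨sInf S, hScomp.sInf_mem hSne, fun s hs => csInf_le hScomp.bddBelow hs⟩
    obtain ⟨b, hbS, hbSup⟩ : ∃ b, b ∈ S ∧ ∀ s ∈ S, s ≤ b :=
      ⟨sSup S, hScomp.sSup_mem hSne, fun s hs => le_csSup hScomp.bddAbove hs⟩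
    have hab : a ≤ b := haInf b hbS
    have ha0 : 0 ≤ a := haS.1.1
    have haL : a ≤ L := haS.1.2
    have hb0 : 0 ≤ b := hbS.1.1
    have hbL : b ≤ L := hbS.1.2
    have hstep_a : ∃ r ∈ projSet (γ a) U, dist p r ≤ C := by
      rcases eq_or_lt_of_le ha0 with h0 | h0
      · exact ⟨p, by rw [← h0, hγ0]; exact hp, by simpa using hC⟩
      · have hfaC : C ≤ f a := by
          by_contra hlt
          push_neg at hlt
          have hε0 : 0 < C - f a := by linarith
          have hts : max 0 (a - (C - f a)) < a := max_lt h0 (by linarith)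
          have htI : max 0 (a - (C - f a)) ∈ Set.Icc 0 L :=
            ⟨le_max_left _ _, by linarith⟩
          have hft := hflip _ htI a haS.1
          have habs : |max 0 (a - (C - f a)) - a| ≤ C - f a := by
            rw [abs_of_nonpos (by linarith)]
            have := le_max_right 0 (a - (C - f a))
            linarith
          have := haInf _ ⟨htI, by linarith⟩
          linarith
        have hgeC : ∀ s ∈ Set.Icc 0 a, C ≤ f s := by
          intro s hs
          rcases eq_or_lt_of_le hs.2 with hsa | hsa
          · rw [hsa]; exact hfaC
          · by_contra hlt
            push_neg at hlt
            have := haInf s ⟨⟨hs.1, by linarith⟩, le_of_lt hlt⟩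
            linarith
        have hgsub : IsGeodesicOn γ 0 a := fun s hs t ht =>
          hg s ⟨hs.1, by linarith [hs.2]⟩ t ⟨ht.1, by linarith [ht.2]⟩
        obtain ⟨r, hr⟩ := projSet_nonempty hU hUne (γ a)
        refine ⟨r, hr, ?_⟩
        have hp' : p ∈ projSet (γ 0) U := by rw [hγ0]; exact hp
        exact proj_close hcontr (le_of_lt h0) hgsub hgeC hp' hr
    have hstep_b : ∃ r ∈ projSet (γ b) U, dist q r ≤ C := by
      rcases eq_or_lt_of_le hbL with hbl | hbl
      · exact ⟨q, by rw [hbl, hγL]; exact hq, by simpa using hC⟩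
      · have hfbC : C ≤ f b := by
          by_contra hlt
          push_neg at hlt
          have hε0 : 0 < C - f b := by linarith
          have hts : b < min L (b + (C - f b)) := lt_min hbl (by linarith)
          have htI : min L (b + (C - f b)) ∈ Set.Icc 0 L :=
            ⟨by linarith, min_le_left _ _⟩
          have hft := hflip _ htI b hbS.1
          have habs : |min L (b + (C - f b)) - b| ≤ C - f b := by
            rw [abs_of_nonneg (by linarith)]
            have := min_le_right L (b + (C - f b))
            linarith
          have := hbSup _ ⟨htI, by linarith⟩
          linarith
        have hgeC : ∀ s ∈ Set.Icc b L, C ≤ f s := by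
          intro s hs
          rcases eq_or_lt_of_le hs.1 with hsb | hsb
          · rw [← hsb]; exact hfbC
          · by_contra hlt
            push_neg at hlt
            have := hbSup s ⟨⟨by linarith, hs.2⟩, le_of_lt hlt⟩
            linarith
        have hgsub : IsGeodesicOn γ b L := fun s hs t ht =>
          hg s ⟨by linarith [hs.1], hs.2⟩ t ⟨by linarith [ht.1], ht.2⟩
        obtain ⟨r, hr⟩ := projSet_nonempty hU hUne (γ b)
        refine ⟨r, hr, ?_⟩
        have hq' : q ∈ projSet (γ L) U := by rw [hγL]; exact hq
        rw [dist_comm]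
        exact proj_close hcontr (le_of_lt hbl) hgsub hgeC hr hq'
    obtain ⟨ra, hra, hpra⟩ := hstep_a
    obtain ⟨rb, hrb, hqrb⟩ := hstep_b
    have h1 : dist ra (γ a) = f a := by rw [dist_comm]; exact hra.2
    have h2 : dist (γ b) rb = f b := hrb.2
    have hfa : f a ≤ C := haS.2
    have hfb : f b ≤ C := hbS.2
    have h3 : dist (γ a) (γ b) = b - a := by
      rw [hg a haS.1 b hbS.1, abs_of_nonpos (by linarith), neg_sub]
    calc dist p q ≤ dist p ra + dist ra q := dist_triangle _ _ _
      _ ≤ dist p ra + (dist ra (γ a) + dist (γ a) q) := by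
          linarith [dist_triangle ra (γ a) q]
      _ ≤ dist p ra + (dist ra (γ a) + (dist (γ a) (γ b) + dist (γ b) q)) := by
          linarith [dist_triangle (γ a) (γ b) q]
      _ ≤ dist p ra + (dist ra (γ a) + (dist (γ a) (γ b) + (dist (γ b) rb + dist rb q))) := by
          linarith [dist_triangle (γ b) rb q]
      _ ≤ C + (C + ((b - a) + (C + C))) := by
          rw [h1, h2, h3, dist_comm rb q]
          linarith
      _ ≤ L + 4 * C := by linarith
  · have hgeC : ∀ s ∈ Set.Icc 0 L, C ≤ f s := by
      intro s hs
      by_contra hlt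
      push_neg at hlt
      exact hSne ⟨s, hs, le_of_lt hlt⟩
    have hp' : p ∈ projSet (γ 0) U := by rw [hγ0]; exact hp
    have hq' : q ∈ projSet (γ L) U := by rw [hγL]; exact hq
    have := proj_close hcontr hL0 hg hgeC hp' hq'
    linarith

/-- Nearest-point projection to a `C`-contracting set is coarsely 1-Lipschitz:
`diam (π_U(y) ∪ π_U(z)) ≤ d(y,z) + 4C`. -/
theorem stmt6 {X : Type*} [MetricSpace X] [ProperSpace X]
    (hgeo : IsGeodesicSpace X)
    (U : Set X) (hU : IsClosed U) (hUne : U.Nonempty)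
    (C : ℝ) (hC : 0 ≤ C) (hcontr : IsContracting C U) :
    ∀ y z : X,
      Metric.diam (projSet y U ∪ projSet z U) ≤ dist y z + 4 * C := by
  intro y z
  apply Metric.diam_le_of_forall_dist_le (by positivity)
  intro p hp q hq
  have key := key_lemma hgeo U hU hUne C hC hcontr
  rcases hp with hp | hp <;> rcases hq with hq | hq
  · have := key y y p q hp hq
    simp only [dist_self] at this
    linarith [dist_nonneg (x := y) (y := z)]
  · exact key y z p q hp hq
  · rw [dist_comm y z]; exact key z y p q hp hq
  · have := key z z p q hp hq
    simp only [dist_self] at this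
    linarith [dist_nonneg (x := y) (y := z)]
end

section
/- Let X be a geodesic metric space and U ⊆ X a closed C-contracting subset. Then U is σ-quasiconvex for some function σ depending only on C: for all q ≥ 1, Q ≥ 0, every (q,Q)-quasi-geodesic with both endpoints in U is contained in the R-neighborhood of U, where R = σ(q,Q) depends only on q, Q, C. -/
open Metric Set Filter

/-- `γ` is a `(q,Q)`-quasi-geodesic parametrized on `[a,b]`. -/
def IsQuasiGeodesicOn {X : Type*} [MetricSpace X] (γ : ℝ → X) (q Q a b : ℝ) : Prop :=
  Continuous γ ∧ ∀ s ∈ Set.Icc a b, ∀ t ∈ Set.Icc a b,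
    |s - t| / q - Q ≤ dist (γ s) (γ t) ∧ dist (γ s) (γ t) ≤ q * |s - t| + Q

/-!
If `γ s` were far from `U`, let `u ≤ s ≤ v` be the last time before `s` and the first time
after `s` at which `γ` is at distance `L = 2q²C + C + Q` from `U`. Cut `[u, v]` into pieces of
parameter length at most `2qC`: their chords have length at most `L - C` and stay `L`-far from
`U`, so by contraction consecutive projections are `C`-close. Hence the projections of `γ u` and
`γ v` are about `(v - u)/(2q)` apart, while the quasi-geodesic lower bound gives
`d(γ u, γ v) ≥ (v - u)/q - Q`. This bounds `v - u`, and with it the distance from `γ s` to `U`.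
-/

lemma exists_subdivision {u v h : ℝ} (huv : u ≤ v) (hh : 0 < h) :
    ∃ (n : ℕ) (w : ℕ → ℝ), w 0 = u ∧ w n = v ∧ (∀ i ≤ n, w i ∈ Icc u v) ∧
      (∀ i < n, |w i - w (i + 1)| ≤ h) ∧ (n : ℝ) ≤ (v - u) / h + 1 := by
  have hquot : 0 ≤ (v - u) / h := div_nonneg (sub_nonneg.2 huv) hh.le
  refine ⟨⌈(v - u) / h⌉₊, fun i => u + min (i * h) (v - u), by simp [huv], ?_, ?_, ?_,
    (Nat.ceil_lt_add_one hquot).le⟩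
  · have : v - u ≤ ⌈(v - u) / h⌉₊ * h := (div_le_iff₀ hh).1 (Nat.le_ceil _)
    simp [min_eq_right this]
  · intro i _
    constructor
    · simp only [le_add_iff_nonneg_right, le_min_iff]; exact ⟨by positivity, by linarith⟩
    · linarith [min_le_right ((i : ℝ) * h) (v - u)]
  · intro i _
    calc |u + min (i * h) (v - u) - (u + min ((i + 1 : ℕ) * h) (v - u))|
        ≤ max |i * h - (i + 1 : ℕ) * h| |(v - u) - (v - u)| := by
          rw [add_sub_add_left_eq_sub]; exact abs_min_sub_min_le_max _ _ _ _
      _ = h := by push_cast; rw [sub_self, abs_zero, show (i : ℝ) * h - (i + 1) * h = -h by ring,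
          abs_neg, abs_of_pos hh, max_eq_left hh.le]

section Crossing

variable {f : ℝ → ℝ} {L a s b : ℝ}

lemma exists_last_eq_of_continuous (hf : Continuous f) (has : a ≤ s) (ha : f a ≤ L)
    (hs : L ≤ f s) : ∃ u ∈ Icc a s, f u = L ∧ ∀ t ∈ Icc u s, L ≤ f t := by
  set S := Icc a s ∩ {t | f t ≤ L}
  have hSne : S.Nonempty := ⟨a, ⟨le_rfl, has⟩, ha⟩
  have hSbdd : BddAbove S := ⟨s, fun t ht => ht.1.2⟩
  have hmem : sSup S ∈ S := (isClosed_Icc.inter (isClosed_le hf continuous_const)).csSup_mem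
    hSne hSbdd
  -- the intermediate value theorem on `[sSup S, s]` produces a point of `S`, hence `sSup S`
  obtain ⟨u, hu, hfu⟩ := intermediate_value_Icc hmem.1.2 hf.continuousOn ⟨hmem.2, hs⟩
  have hSu : u ∈ S := ⟨⟨hmem.1.1.trans hu.1, hu.2⟩, hfu.le⟩
  have hu_eq : u = sSup S := le_antisymm (le_csSup hSbdd hSu) hu.1
  refine ⟨u, hSu.1, hfu, fun t ht => le_of_not_gt fun hlt => hlt.ne ?_⟩
  have htS : t ∈ S := ⟨⟨hSu.1.1.trans ht.1, ht.2⟩, hlt.le⟩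
  rw [le_antisymm (hu_eq ▸ le_csSup hSbdd htS) ht.1, hfu]

lemma exists_first_eq_of_continuous (hf : Continuous f) (hsb : s ≤ b) (hb : f b ≤ L)
    (hs : L ≤ f s) : ∃ v ∈ Icc s b, f v = L ∧ ∀ t ∈ Icc s v, L ≤ f t := by
  obtain ⟨u, hu, hfu, hdeep⟩ := exists_last_eq_of_continuous (f := fun t => f (-t))
    (hf.comp continuous_neg) (neg_le_neg hsb) (by simpa using hb) (by simpa using hs)
  refine ⟨-u, ⟨le_neg.2 hu.2, neg_le.1 hu.1⟩, hfu, fun t ht => ?_⟩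
  simpa using hdeep (-t) ⟨le_neg.1 ht.2, neg_le_neg ht.1⟩

end Crossing

section Contracting

variable {X : Type*} [MetricSpace X] {U : Set X} {C : ℝ}

lemma IsContracting.mono {C' : ℝ} (hcon : IsContracting C U) (h : C ≤ C') :
    IsContracting C' U :=
  fun γ a b hab hγ hdeep => (hcon γ a b hab hγ fun s hs => h.trans (hdeep s hs)).trans h

lemma IsQuasiGeodesicOn.mono {γ : ℝ → X} {q Q a b u v : ℝ}
    (hγ : IsQuasiGeodesicOn γ q Q a b) (hau : a ≤ u) (hvb : v ≤ b) :
    IsQuasiGeodesicOn γ q Q u v :=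
  ⟨hγ.1, fun s hs t ht =>
    hγ.2 s ⟨hau.trans hs.1, hs.2.trans hvb⟩ t ⟨hau.trans ht.1, ht.2.trans hvb⟩⟩

lemma IsQuasiGeodesicOn.infDist_le {γ : ℝ → X} {q Q a b s t : ℝ}
    (hγ : IsQuasiGeodesicOn γ q Q a b) (hs : s ∈ Icc a b) (ht : t ∈ Icc a b) :
    infDist (γ s) U ≤ infDist (γ t) U + (q * |s - t| + Q) :=
  infDist_le_infDist_add_dist.trans (add_le_add_right (hγ.2 s hs t ht).2 _)

lemma exists_mem_projSet [ProperSpace X] (hU : IsClosed U) (hne : U.Nonempty) (x : X) :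
    ∃ p, p ∈ projSet x U := by
  obtain ⟨y, hy, hdy⟩ := hU.exists_infDist_eq_dist hne x
  exact ⟨y, hy, hdy.symm⟩

lemma IsContracting.dist_le_of_mem_projSet (hgeo : IsGeodesicSpace X)
    (hcon : IsContracting C U) {x y p p' : X} {lam : ℝ} (hx : lam ≤ infDist x U)
    (hxy : dist x y ≤ lam - C) (hp : p ∈ projSet x U) (hp' : p' ∈ projSet y U) :
    dist p p' ≤ C := by
  obtain ⟨g, hg0, hgd, hg⟩ := hgeo x y
  set d := dist x y
  have hd : 0 ≤ d := dist_nonneg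
  have hdist : ∀ r ∈ Icc 0 d, dist x (g r) = r := fun r hr => by
    rw [← hg0, hg 0 ⟨le_rfl, hd⟩ r hr, zero_sub, abs_neg, abs_of_nonneg hr.1]
  have hinf : ∀ r ∈ Icc 0 d, infDist x U ≤ infDist (g r) U + r := fun r hr => by
    simpa [hdist r hr] using infDist_le_infDist_add_dist (x := x) (y := g r) (s := U)
  set A := ⋃ r ∈ Icc 0 d, projSet (g r) U
  have hbdd : Bornology.IsBounded A := by
    refine (isBounded_closedBall (x := x) (r := infDist x U + 2 * d)).subset ?_
    simp only [A, iUnion_subset_iff]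
    intro r hr z hz
    have hgz : infDist (g r) U ≤ infDist x U + r := by
      simpa [dist_comm, hdist r hr] using
        infDist_le_infDist_add_dist (x := g r) (y := x) (s := U)
    rw [mem_closedBall, dist_comm]
    linarith [dist_triangle x (g r) z, hdist r hr, hz.2, hr.2]
  have hpA : p ∈ A := mem_biUnion ⟨le_rfl, hd⟩ (hg0 ▸ hp)
  have hp'A : p' ∈ A := mem_biUnion ⟨hd, le_rfl⟩ (hgd ▸ hp')
  refine (dist_le_diam_of_mem hbdd hpA hp'A).trans (hcon g 0 d hd hg fun r hr => ?_)
  linarith [hinf r hr, hr.2]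

lemma IsContracting.dist_le_of_chain (hgeo : IsGeodesicSpace X) (hcon : IsContracting C U)
    {n : ℕ} {x p : ℕ → X} {lam : ℝ} (hdeep : ∀ i ≤ n, lam ≤ infDist (x i) U)
    (hstep : ∀ i < n, dist (x i) (x (i + 1)) ≤ lam - C) (hp : ∀ i, p i ∈ projSet (x i) U) :
    dist (p 0) (p n) ≤ n * C :=
  calc dist (p 0) (p n) ≤ ∑ i ∈ Finset.range n, dist (p i) (p (i + 1)) :=
        dist_le_range_sum_dist p n
    _ ≤ ∑ _i ∈ Finset.range n, C := Finset.sum_le_sum fun i hi =>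
        hcon.dist_le_of_mem_projSet hgeo (hdeep i (Finset.mem_range.1 hi).le)
          (hstep i (Finset.mem_range.1 hi)) (hp i) (hp (i + 1))
    _ = n * C := by rw [Finset.sum_const, Finset.card_range, nsmul_eq_mul]

variable [ProperSpace X] {γ : ℝ → X} {q Q u v L : ℝ}

lemma IsContracting.exists_dist_projSet_le (hgeo : IsGeodesicSpace X) (hU : IsClosed U)
    (hne : U.Nonempty) (hcon : IsContracting C U) (hC : 0 < C) (hq : 0 < q)
    (hγ : IsQuasiGeodesicOn γ q Q u v) (huv : u ≤ v) (hL : 2 * q ^ 2 * C + C + Q ≤ L)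
    (hdeep : ∀ t ∈ Icc u v, L ≤ infDist (γ t) U) :
    ∃ p ∈ projSet (γ u) U, ∃ p' ∈ projSet (γ v) U,
      dist p p' ≤ (v - u) / (2 * q) + C := by
  have hstep : 0 < 2 * q * C := by positivity
  obtain ⟨n, w, hw0, hwn, hw, hwstep, hn⟩ := exists_subdivision huv hstep
  choose P hP using fun i => exists_mem_projSet hU hne (γ (w i))
  have hchord : ∀ i < n, dist (γ (w i)) (γ (w (i + 1))) ≤ L - C := fun i hi => by
    have := (hγ.2 _ (hw i hi.le) _ (hw (i + 1) hi)).2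
    nlinarith [hwstep i hi]
  refine ⟨P 0, hw0 ▸ hP 0, P n, hwn ▸ hP n, ?_⟩
  calc dist (P 0) (P n) ≤ n * C :=
        hcon.dist_le_of_chain hgeo (fun i hi => hdeep _ (hw i hi)) hchord hP
    _ ≤ ((v - u) / (2 * q * C) + 1) * C := by gcongr
    _ = (v - u) / (2 * q) + C := by field_simp

lemma IsContracting.sub_le_of_quasiGeodesic (hgeo : IsGeodesicSpace X) (hU : IsClosed U)
    (hne : U.Nonempty) (hcon : IsContracting C U) (hC : 0 < C) (hq : 0 < q)
    (hγ : IsQuasiGeodesicOn γ q Q u v) (huv : u ≤ v) (hL : 2 * q ^ 2 * C + C + Q ≤ L)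
    (hdeep : ∀ t ∈ Icc u v, L ≤ infDist (γ t) U) (hu : infDist (γ u) U ≤ L)
    (hv : infDist (γ v) U ≤ L) : v - u ≤ 2 * q * (2 * L + C + Q) := by
  obtain ⟨p, hp, p', hp', hpp'⟩ :=
    hcon.exists_dist_projSet_le hgeo hU hne hC hq hγ huv hL hdeep
  have hlower := (hγ.2 u ⟨le_rfl, huv⟩ v ⟨huv, le_rfl⟩).1
  rw [abs_sub_comm, abs_of_nonneg (sub_nonneg.2 huv)] at hlower
  have hupper : dist (γ u) (γ v) ≤ L + ((v - u) / (2 * q) + C) + L := by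
    calc dist (γ u) (γ v) ≤ dist (γ u) p + dist p p' + dist p' (γ v) := dist_triangle4 _ _ _ _
      _ ≤ L + ((v - u) / (2 * q) + C) + L := by
        rw [hp.2, dist_comm p', hp'.2]; linarith
  have : (v - u) / (2 * q) ≤ 2 * L + C + Q := by
    have : (v - u) / q = 2 * ((v - u) / (2 * q)) := by field_simp
    linarith
  rwa [div_le_iff₀ (by positivity), mul_comm] at this

end Contracting

/-- A `C`-contracting subset is `σ`-quasiconvex for a function `σ` depending
only on `C`: every `(q,Q)`-quasi-geodesic with endpoints in `U` stays in the
`σ(q,Q)`-neighborhood of `U`. -/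
theorem stmt7 (C : ℝ) (hC : 0 ≤ C) :
    ∃ σ : ℝ → ℝ → ℝ,
      ∀ (X : Type) [MetricSpace X] [ProperSpace X],
        IsGeodesicSpace X →
        ∀ (U : Set X), IsClosed U → IsContracting C U →
        ∀ q Q : ℝ, 1 ≤ q → 0 ≤ Q →
        ∀ (γ : ℝ → X) (a b : ℝ), a ≤ b →
          IsQuasiGeodesicOn γ q Q a b → γ a ∈ U → γ b ∈ U →
          ∀ s ∈ Set.Icc a b, Metric.infDist (γ s) U ≤ σ q Q := by
  refine ⟨fun q Q => (2 * q ^ 2 * (C + 1) + (C + 1) + Q) + Q +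
    q ^ 2 * (2 * (2 * q ^ 2 * (C + 1) + (C + 1) + Q) + (C + 1) + Q), ?_⟩
  intro X _ _ hgeo U hU hcon q Q hq hQ γ a b _ hγ hga hgb s hs
  beta_reduce
  -- `C` may be `0`, while the subdivision step `2 q C` must be positive
  set C' := C + 1
  set L := 2 * q ^ 2 * C' + C' + Q
  have hC' : 0 < C' := by positivity
  have hL : 0 ≤ L := by positivity
  rcases le_or_gt (infDist (γ s) U) L with hle | hlt
  · nlinarith
  have hf : Continuous fun t => infDist (γ t) U := (continuous_infDist_pt U).comp hγ.1
  obtain ⟨u, hu, hfu, hdeep_u⟩ :=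
    exists_last_eq_of_continuous hf hs.1 (by simpa [infDist_zero_of_mem hga]) hlt.le
  obtain ⟨v, hv, hfv, hdeep_v⟩ :=
    exists_first_eq_of_continuous hf hs.2 (by simpa [infDist_zero_of_mem hgb]) hlt.le
  have hdeep : ∀ t ∈ Icc u v, L ≤ infDist (γ t) U := fun t ht =>
    (le_total t s).elim (fun h => hdeep_u t ⟨ht.1, h⟩) (fun h => hdeep_v t ⟨h, ht.2⟩)
  have hlen := (hcon.mono (lt_add_one C).le).sub_le_of_quasiGeodesic hgeo hU ⟨γ a, hga⟩ hC'
    (by positivity) (hγ.mono hu.1 hv.2) (hu.2.trans hv.1) le_rfl hdeep hfu.le hfv.le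
  have hsu := hγ.infDist_le (U := U) hs ⟨hu.1, hu.2.trans hs.2⟩
  have hsv := hγ.infDist_le (U := U) hs ⟨hs.1.trans hv.1, hv.2⟩
  rw [hfu, abs_of_nonneg (sub_nonneg.2 hu.2)] at hsu
  rw [hfv, abs_of_nonpos (sub_nonpos.2 hv.1)] at hsv
  nlinarith
end

section
/- Let X be a geodesic metric space, U a closed C-contracting subset, and r ≥ 0. Then the closed r-neighborhood N_r(U) is Ĉ-contracting for a constant Ĉ depending only on C and r. -/
open Metric Set Filter

/-- The closed `r`-neighborhood of a `C`-contracting set is `Ĉ`-contracting,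
for a constant `Ĉ` depending only on `C` and `r`. -/
theorem stmt8 (C r : ℝ) (hC : 0 < C) (hr : 0 ≤ r) :
    ∃ Chat : ℝ,
      ∀ (X : Type) [MetricSpace X] [ProperSpace X],
        IsGeodesicSpace X →
        ∀ (U : Set X), IsClosed U → U.Nonempty → IsContracting C U →
          IsContracting Chat {x : X | Metric.infDist x U ≤ r} := by
  refine ⟨C + 2 * r, ?_⟩
  intro X _ _ hgeo U hUcl hUne hcontr
  set V : Set X := {x : X | Metric.infDist x U ≤ r} with hV
  have hUV : U ⊆ V := by
    intro u hu
    simp only [hV, mem_setOf_eq]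
    calc Metric.infDist u U ≤ dist u u := Metric.infDist_le_dist_of_mem hu
      _ = 0 := dist_self u
      _ ≤ r := hr
  have hUVd : ∀ x : X, Metric.infDist x V ≤ Metric.infDist x U :=
    fun x => Metric.infDist_le_infDist_of_subset hUV hUne
  -- key geodesic-space estimate
  have key : ∀ x : X, r ≤ Metric.infDist x U →
      Metric.infDist x V ≤ Metric.infDist x U - r := by
    intro x hx
    obtain ⟨u, hu, hdu⟩ := hUcl.exists_infDist_eq_dist hUne x
    obtain ⟨g, hg0, hg1, hg2⟩ := hgeo x u
    set d := dist x u with hdd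
    clear_value d
    have hd : r ≤ d := hdu ▸ hx
    have h0d : (0:ℝ) ≤ d := hdd ▸ dist_nonneg
    have hmem : d - r ∈ Set.Icc (0:ℝ) d := ⟨by linarith, by linarith⟩
    have hmem0 : (0:ℝ) ∈ Set.Icc (0:ℝ) d := ⟨le_refl _, h0d⟩
    have hmemd : d ∈ Set.Icc (0:ℝ) d := ⟨h0d, le_refl _⟩
    have hzu : dist (g (d - r)) u = r := by
      rw [← hg1, hg2 _ hmem _ hmemd, abs_of_nonpos (by linarith)]; ring
    have hzV : g (d - r) ∈ V := by
      simp only [hV, mem_setOf_eq]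
      calc Metric.infDist (g (d - r)) U ≤ dist (g (d - r)) u :=
            Metric.infDist_le_dist_of_mem hu
        _ = r := hzu
    calc Metric.infDist x V ≤ dist x (g (d - r)) :=
          Metric.infDist_le_dist_of_mem hzV
      _ = |0 - (d - r)| := by rw [← hg0]; exact hg2 0 hmem0 _ hmem
      _ = d - r := by rw [abs_of_nonpos (by linarith)]; ring
      _ = Metric.infDist x U - r := by rw [hdu]
  intro γ a b hab hgeod hfar
  -- the geodesic is C-far from U
  have hfarU : ∀ s ∈ Set.Icc a b, C ≤ Metric.infDist (γ s) U := by
    intro s hs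
    have h1 := hfar s hs
    have h2 := hUVd (γ s)
    linarith
  have hdiamB := hcontr γ a b hab hgeod hfarU
  set B := ⋃ s ∈ Set.Icc a b, projSet (γ s) U with hB
  -- every projection point to V is r-close to a projection point to U
  have hproj : ∀ s ∈ Set.Icc a b, ∀ p ∈ projSet (γ s) V,
      ∃ q ∈ projSet (γ s) U, dist p q ≤ r := by
    intro s hs p hp
    obtain ⟨hpV, hpd⟩ := hp
    obtain ⟨q, hq, hdq⟩ := hUcl.exists_infDist_eq_dist hUne p
    have hpq : dist p q ≤ r := by rw [← hdq]; exact hpV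
    refine ⟨q, ⟨hq, ?_⟩, hpq⟩
    have hU1 : Metric.infDist (γ s) U ≤ dist (γ s) q :=
      Metric.infDist_le_dist_of_mem hq
    have hrle : r ≤ Metric.infDist (γ s) U := by
      have h1 := hfar s hs
      have h2 := hUVd (γ s)
      linarith
    have hU2 : dist (γ s) q ≤ Metric.infDist (γ s) U := by
      calc dist (γ s) q ≤ dist (γ s) p + dist p q := dist_triangle _ _ _
        _ ≤ Metric.infDist (γ s) V + r := by rw [hpd]; linarith
        _ ≤ Metric.infDist (γ s) U := by
            have := key (γ s) hrle; linarith
    linarith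
  -- B is bounded
  have hBbdd : Bornology.IsBounded B := by
    obtain ⟨u0, hu0⟩ := hUne
    apply Bornology.IsBounded.subset (Metric.isBounded_closedBall
      (x := γ a) (r := dist (γ a) u0 + 2 * (b - a)))
    intro q hq
    simp only [hB, mem_iUnion, exists_prop] at hq
    obtain ⟨s, hs, hqU, hqd⟩ := hq
    have hga : dist (γ s) (γ a) ≤ b - a := by
      rw [hgeod s hs a ⟨le_refl _, hab⟩, abs_of_nonneg (by linarith [hs.1])]
      linarith [hs.2]
    have h1 : dist (γ s) q ≤ dist (γ s) u0 :=
      hqd ▸ Metric.infDist_le_dist_of_mem hu0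
    have h2 : dist (γ s) u0 ≤ dist (γ s) (γ a) + dist (γ a) u0 := dist_triangle _ _ _
    simp only [Metric.mem_closedBall]
    calc dist q (γ a) ≤ dist q (γ s) + dist (γ s) (γ a) := dist_triangle _ _ _
      _ = dist (γ s) q + dist (γ s) (γ a) := by rw [dist_comm q (γ s)]
      _ ≤ dist (γ a) u0 + 2 * (b - a) := by linarith
  -- conclude
  apply Metric.diam_le_of_forall_dist_le (by linarith)
  intro p1 hp1 p2 hp2
  simp only [mem_iUnion, exists_prop] at hp1 hp2
  obtain ⟨s1, hs1, hp1'⟩ := hp1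
  obtain ⟨s2, hs2, hp2'⟩ := hp2
  obtain ⟨q1, hq1, hd1⟩ := hproj s1 hs1 p1 hp1'
  obtain ⟨q2, hq2, hd2⟩ := hproj s2 hs2 p2 hp2'
  have hq1B : q1 ∈ B := by
    simp only [hB, mem_iUnion, exists_prop]; exact ⟨s1, hs1, hq1⟩
  have hq2B : q2 ∈ B := by
    simp only [hB, mem_iUnion, exists_prop]; exact ⟨s2, hs2, hq2⟩
  have hqq : dist q1 q2 ≤ C :=
    le_trans (Metric.dist_le_diam_of_mem hBbdd hq1B hq2B) hdiamB
  calc dist p1 p2 ≤ dist p1 q1 + dist q1 q2 + dist q2 p2 := dist_triangle4 _ _ _ _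
    _ ≤ r + C + r := by rw [dist_comm q2 p2]; linarith
    _ = C + 2 * r := by ring
end

section
/- Let G act properly by isometries on a proper geodesic space X with basepoint o. Suppose every element g of a set W ⊆ G admits a factorization g = g₁·ĝ·g₂ with g₁, g₂, ĝ ∈ G, |d(o,go) − d(o,g₁o) − d(o,g₂o) − d(o,ĝo)| ≤ 4M, ĝ ∈ V for a fixed subset V ⊆ G, and d(o,ĝo) ≥ θ·d(o,go) − 2M, where θ ∈ (0,1] and M > 0 are fixed. If G has purely exponential growth with exponent δ and V is exponentially negligible, then W is exponentially negligible. -/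
/-!
Write `|g| = d(o, g o)` and `B(r)` for the ball `{g | |g| ≤ r}`. The elements of `W ∩ B(n)` with
`|g| ≤ n / 2` lie in `B(n / 2)`, which is smaller than `B(n)` by a factor `≈ e^{-δn/2}`. Every
other `g ∈ W ∩ B(n)` is the product of a triple `(g₁, ĝ, g₂)` with `ĝ ∈ V`, `|ĝ| ≥ θn/2 - 2M` and
`|g₁| + |ĝ| + |g₂| ≤ n + 4M`. Rounding `|g₁|` and `|ĝ|` up to integers `k` and `ℓ` sorts these
triples into `O(n²)` boxes `B(k) × (V ∩ B(ℓ)) × B(n + 4M + 2 - k - ℓ)`, each of size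
`≲ λ^ℓ e^{δn} ≤ λ^{θn/2 - 2M} e^{δn}`; the factor `n²` is absorbed by half of the exponential decay.
-/

open Real Set

theorem Monotone.le_mul_exp_of_natCast_le {N : ℝ → ℝ} (hmono : Monotone N)
    (hneg : ∀ r < 0, N r ≤ 0) {C κ : ℝ} (hC : 0 ≤ C)
    (hnat : ∀ n : ℕ, 1 ≤ n → N n ≤ C * exp (n * κ)) (r : ℝ) :
    N r ≤ C * exp (2 * |κ|) * exp (r * κ) := by
  rcases lt_or_ge r 0 with hr | hr
  · exact (hneg r hr).trans (by positivity)
  have hrn : r ≤ (⌈r⌉₊ + 1 : ℕ) := by push_cast; linarith [Nat.le_ceil r]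
  have hnr : ((⌈r⌉₊ + 1 : ℕ) : ℝ) ≤ r + 2 := by push_cast; linarith [Nat.ceil_lt_add_one hr]
  calc N r ≤ N (⌈r⌉₊ + 1 : ℕ) := hmono hrn
    _ ≤ C * exp ((⌈r⌉₊ + 1 : ℕ) * κ) := hnat _ (by omega)
    _ ≤ C * exp (2 * |κ| + r * κ) := by
        gcongr
        nlinarith [le_abs_self κ, neg_abs_le κ]
    _ = C * exp (2 * |κ|) * exp (r * κ) := by rw [exp_add, mul_assoc]

theorem sq_add_le_mul_exp {a b x : ℝ} (ha : 0 < a) (hb : 0 ≤ b) (hx : 0 ≤ x) :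
    (x + b) ^ 2 ≤ max (2 / a) b ^ 2 * exp (a * x) := by
  set m := max (2 / a) b
  have hm : 0 ≤ m := le_max_of_le_right hb
  have hx' : x ≤ m * (a * x / 2) :=
    calc x = 2 / a * (a * x / 2) := by field_simp
      _ ≤ m * (a * x / 2) := by gcongr; exact le_max_left _ _
  have hlin : x + b ≤ m * exp (a * x / 2) := by
    nlinarith [le_max_right (2 / a) b, add_one_le_exp (a * x / 2)]
  calc (x + b) ^ 2 ≤ (m * exp (a * x / 2)) ^ 2 := by gcongr
    _ = m ^ 2 * exp (a * x) := by rw [mul_pow, sq (exp _), ← exp_add, add_halves]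

section Counting

variable {α : Type*} {len : α → ℝ}

theorem ncard_sep_le_mul_exp (hlen : ∀ x, 0 ≤ len x) (hfin : ∀ r : ℝ, {x | len x ≤ r}.Finite)
    (s : Set α) {C κ : ℝ} (hC : 0 ≤ C)
    (hnat : ∀ n : ℕ, 1 ≤ n → ({x | x ∈ s ∧ len x ≤ n}.ncard : ℝ) ≤ C * exp (n * κ)) (r : ℝ) :
    ({x | x ∈ s ∧ len x ≤ r}.ncard : ℝ) ≤ C * exp (2 * |κ|) * exp (r * κ) := by
  refine Monotone.le_mul_exp_of_natCast_le (N := fun r => ({x | x ∈ s ∧ len x ≤ r}.ncard : ℝ))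
    (fun r r' hr => ?_) (fun r hr => ?_) hC hnat r
  · exact Nat.cast_le.2 <| ncard_le_ncard (fun x hx => ⟨hx.1, hx.2.trans hr⟩)
      ((hfin r').subset fun x hx => hx.2)
  · have : {x | x ∈ s ∧ len x ≤ r} = ∅ :=
      eq_empty_of_forall_notMem fun x hx => by linarith [hlen x, hx.2]
    simp [this]

theorem ncard_le_mul_exp (hlen : ∀ x, 0 ≤ len x) (hfin : ∀ r : ℝ, {x | len x ≤ r}.Finite)
    {C κ : ℝ} (hC : 0 ≤ C) (hnat : ∀ n : ℕ, 1 ≤ n → ({x | len x ≤ n}.ncard : ℝ) ≤ C * exp (n * κ))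
    (r : ℝ) : ({x | len x ≤ r}.ncard : ℝ) ≤ C * exp (2 * |κ|) * exp (r * κ) := by
  simpa only [mem_univ, true_and] using
    ncard_sep_le_mul_exp hlen hfin univ hC (by simpa only [mem_univ, true_and] using hnat) r

variable (len) in
def middleTriples (V : Set α) (ρ R : ℝ) : Set (α × α × α) :=
  {p | p.2.1 ∈ V ∧ ρ ≤ len p.2.1 ∧ len p.1 + len p.2.1 + len p.2.2 ≤ R}

theorem finite_middleTriples (hlen : ∀ x, 0 ≤ len x) (hfin : ∀ r : ℝ, {x | len x ≤ r}.Finite)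
    (V : Set α) (ρ R : ℝ) : (middleTriples len V ρ R).Finite :=
  ((hfin R).prod ((hfin R).prod (hfin R))).subset fun p ⟨_, _, hp⟩ => by
    refine ⟨?_, ?_, ?_⟩ <;> simp only [mem_ofPred_eq] <;>
      linarith [hlen p.1, hlen p.2.1, hlen p.2.2]

theorem ncard_middleTriples_le (hlen : ∀ x, 0 ≤ len x) (hfin : ∀ r : ℝ, {x | len x ≤ r}.Finite)
    (V : Set α) {C D δ ε : ℝ} (hC : 0 ≤ C) (hD : 0 ≤ D) (hε : 0 ≤ ε)
    (hball : ∀ r : ℝ, ({x | len x ≤ r}.ncard : ℝ) ≤ C * exp (r * δ))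
    (hV : ∀ r : ℝ, ({x | x ∈ V ∧ len x ≤ r}.ncard : ℝ) ≤ D * exp (r * (δ - ε))) (ρ R : ℝ) :
    ((middleTriples len V ρ R).ncard : ℝ) ≤
      (⌈R⌉₊ + 1) ^ 2 * (C ^ 2 * D * exp (2 * δ) * exp (R * δ - ρ * ε)) := by
  classical
  -- `(a, b, c)` lies in the piece indexed by `(⌈len a⌉₊, ⌈len b⌉₊)`
  set piece : ℕ × ℕ → Set (α × α × α) := fun q =>
    {x | len x ≤ q.1} ×ˢ ({x | x ∈ V ∧ len x ≤ q.2} ×ˢ {x | len x ≤ R + 2 - q.1 - q.2})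
  set I := Finset.range (⌈R⌉₊ + 1) ×ˢ Finset.Icc ⌈ρ⌉₊ ⌈R⌉₊
  have hcover : middleTriples len V ρ R ⊆ ⋃ q ∈ I, piece q := by
    rintro ⟨a, b, c⟩ ⟨hbV, hρb, hsum⟩
    have ha := Nat.ceil_lt_add_one (hlen a)
    have hb := Nat.ceil_lt_add_one (hlen b)
    refine mem_biUnion (x := (⌈len a⌉₊, ⌈len b⌉₊)) ?_
      ⟨Nat.le_ceil (len a), ⟨hbV, Nat.le_ceil (len b)⟩, ?_⟩
    · simp only [I, Finset.coe_product, Finset.coe_range, Finset.coe_Icc, mem_prod, mem_Iio,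
        mem_Icc, Nat.lt_succ_iff]
      refine ⟨Nat.ceil_mono ?_, Nat.ceil_mono hρb, Nat.ceil_mono ?_⟩ <;>
        linarith [hlen a, hlen b, hlen c]
    · simp only [mem_ofPred_eq]; linarith
  have hpiece : ∀ q ∈ I, ((piece q).ncard : ℝ) ≤
      C ^ 2 * D * exp (2 * δ) * exp (R * δ - ρ * ε) := by
    rintro ⟨k, ℓ⟩ hq
    have hρℓ : ρ ≤ ℓ := (Nat.le_ceil ρ).trans <| by
      exact_mod_cast (Finset.mem_Icc.1 (Finset.mem_product.1 hq).2).1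
    simp only [piece, ncard_prod, Nat.cast_mul]
    calc _ ≤ C * exp (k * δ) * (D * exp (ℓ * (δ - ε)) * (C * exp ((R + 2 - k - ℓ) * δ))) := by
          gcongr
          exacts [hball _, hV _, hball _]
      _ = C ^ 2 * D * exp (2 * δ) * exp (R * δ - ℓ * ε) := by
          have : exp (k * δ) * exp (ℓ * (δ - ε)) * exp ((R + 2 - k - ℓ) * δ) =
              exp (2 * δ) * exp (R * δ - ℓ * ε) := by
            simp only [← exp_add]; ring_nf
          linear_combination C ^ 2 * D * this
      _ ≤ _ := by gcongr
  have hcard : I.card ≤ (⌈R⌉₊ + 1) ^ 2 := by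
    simp only [I, Finset.card_product, Finset.card_range, Nat.card_Icc]
    rw [sq]; gcongr; omega
  calc ((middleTriples len V ρ R).ncard : ℝ) ≤ ((⋃ q ∈ I, piece q).ncard : ℝ) :=
        Nat.cast_le.2 <| ncard_le_ncard hcover <| I.finite_toSet.biUnion fun q _ =>
          (hfin _).prod (((hfin _).subset fun x hx => hx.2).prod (hfin _))
    _ ≤ ∑ q ∈ I, ((piece q).ncard : ℝ) := by exact_mod_cast I.set_ncard_biUnion_le piece
    _ ≤ I.card * (C ^ 2 * D * exp (2 * δ) * exp (R * δ - ρ * ε)) := by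
        simpa using Finset.sum_le_card_nsmul I _ _ hpiece
    _ ≤ _ := by gcongr; exact_mod_cast hcard

end Counting

section Group

variable {G : Type*} [Group G] {len : G → ℝ}

theorem ncard_sep_le_ncard_add_ncard_middleTriples (hlen : ∀ x, 0 ≤ len x)
    (hfin : ∀ r : ℝ, {x | len x ≤ r}.Finite) {W V : Set G} {θ M : ℝ} (hθ : 0 ≤ θ)
    (hfact : ∀ g ∈ W, ∃ g₁ ghat g₂ : G, g = g₁ * ghat * g₂ ∧
      |len g - len g₁ - len g₂ - len ghat| ≤ 4 * M ∧ ghat ∈ V ∧ θ * len g - 2 * M ≤ len ghat)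
    (r : ℝ) :
    {g | g ∈ W ∧ len g ≤ r}.ncard ≤
      {g | len g ≤ r / 2}.ncard + (middleTriples len V (θ * r / 2 - 2 * M) (r + 4 * M)).ncard := by
  have hT := finite_middleTriples hlen hfin V (θ * r / 2 - 2 * M) (r + 4 * M)
  have hcover : {g | g ∈ W ∧ len g ≤ r} ⊆ {g | len g ≤ r / 2} ∪
      (fun p : G × G × G => p.1 * p.2.1 * p.2.2) ''
        middleTriples len V (θ * r / 2 - 2 * M) (r + 4 * M) := by
    rintro g ⟨hgW, hgr⟩
    by_cases hg : len g ≤ r / 2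
    · exact Or.inl hg
    obtain ⟨g₁, ghat, g₂, rfl, hsum, hV, hlong⟩ := hfact g hgW
    refine Or.inr ⟨(g₁, ghat, g₂), ⟨hV, ?_, ?_⟩, rfl⟩
    · nlinarith
    · linarith [(abs_le.1 hsum).1]
  calc {g | g ∈ W ∧ len g ≤ r}.ncard ≤ ({g | len g ≤ r / 2} ∪ _).ncard :=
        ncard_le_ncard hcover ((hfin _).union (hT.image _))
    _ ≤ _ := (ncard_union_le _ _).trans (by gcongr; exact ncard_image_le hT)

end Group

def ExpNegligible {α : Type*} (len : α → ℝ) (A : Set α) : Prop :=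
  ∃ c lam : ℝ, 0 < c ∧ 0 < lam ∧ lam < 1 ∧ ∀ n : ℕ, 1 ≤ n →
    (Nat.card {x | x ∈ A ∧ len x ≤ (n : ℝ)} : ℝ) ≤
      c * lam ^ n * (Nat.card {x | len x ≤ (n : ℝ)} : ℝ)

namespace ExpNegligible

variable {α : Type*} {len : α → ℝ}

theorem of_ncard_le_mul_exp {A : Set α} {c₁ δ K η : ℝ} (hc₁ : 0 < c₁) (hK : 0 < K) (hη : 0 < η)
    (hlow : ∀ n : ℕ, 1 ≤ n → c₁ * exp (n * δ) ≤ (Nat.card {x | len x ≤ (n : ℝ)} : ℝ))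
    (hA : ∀ n : ℕ, 1 ≤ n →
      ({x | x ∈ A ∧ len x ≤ (n : ℝ)}.ncard : ℝ) ≤ K * exp (-(n * η)) * exp (n * δ)) :
    ExpNegligible len A := by
  refine ⟨K / c₁, exp (-η), by positivity, exp_pos _, exp_lt_one_iff.2 (neg_lt_zero.2 hη),
    fun n hn => ?_⟩
  rw [Nat.card_coe_set_eq, ← exp_nat_mul, mul_neg]
  calc _ ≤ K * exp (-(n * η)) * exp (n * δ) := hA n hn
    _ ≤ K * exp (-(n * η)) * ((Nat.card {x | len x ≤ (n : ℝ)} : ℝ) / c₁) := by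
        gcongr; rw [le_div_iff₀ hc₁, mul_comm]; exact hlow n hn
    _ = _ := by ring

theorem exists_ncard_le_mul_exp (hlen : ∀ x, 0 ≤ len x)
    (hfin : ∀ r : ℝ, {x | len x ≤ r}.Finite) {V : Set α} (hV : ExpNegligible len V) {c₂ δ : ℝ}
    (hc₂ : 0 ≤ c₂) (hupper : ∀ n : ℕ, 1 ≤ n → ({x | len x ≤ n}.ncard : ℝ) ≤ c₂ * exp (n * δ)) :
    ∃ D ε : ℝ, 0 ≤ D ∧ 0 < ε ∧
      ∀ r : ℝ, ({x | x ∈ V ∧ len x ≤ r}.ncard : ℝ) ≤ D * exp (r * (δ - ε)) := by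
  obtain ⟨c, lam, hc, hlam0, hlam1, hVneg⟩ := hV
  refine ⟨_, -log lam, by positivity, neg_pos.2 (log_neg hlam0 hlam1),
    ncard_sep_le_mul_exp hlen hfin V (C := c * c₂) (by positivity) fun n hn => ?_⟩
  calc _ ≤ c * lam ^ n * ({x | len x ≤ n}.ncard : ℝ) := by
        simpa only [Nat.card_coe_set_eq] using hVneg n hn
    _ ≤ c * lam ^ n * (c₂ * exp (n * δ)) := by gcongr; exact hupper n hn
    _ = c * c₂ * exp (n * (δ - -log lam)) := by
        rw [sub_neg_eq_add, mul_add, exp_add, exp_nat_mul (log lam), exp_log hlam0]; ring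

theorem of_factorization {G : Type*} [Group G] {len : G → ℝ} (hlen : ∀ x, 0 ≤ len x)
    (hfin : ∀ r : ℝ, {x | len x ≤ r}.Finite) {θ M : ℝ} (hθ : 0 < θ) (hM : 0 ≤ M) {W V : Set G}
    (hfact : ∀ g ∈ W, ∃ g₁ ghat g₂ : G, g = g₁ * ghat * g₂ ∧
      |len g - len g₁ - len g₂ - len ghat| ≤ 4 * M ∧ ghat ∈ V ∧ θ * len g - 2 * M ≤ len ghat)
    {δ c₁ c₂ : ℝ} (hδ : 0 < δ) (hc₁ : 0 < c₁) (hc₂ : 0 < c₂)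
    (hgrowth : ∀ n : ℕ, 1 ≤ n →
      c₁ * exp (n * δ) ≤ (Nat.card {g | len g ≤ (n : ℝ)} : ℝ) ∧
      (Nat.card {g | len g ≤ (n : ℝ)} : ℝ) ≤ c₂ * exp (n * δ))
    (hV : ExpNegligible len V) : ExpNegligible len W := by
  have hupper (n : ℕ) (hn : 1 ≤ n) : ({g | len g ≤ n}.ncard : ℝ) ≤ c₂ * exp (n * δ) := by
    simpa only [Nat.card_coe_set_eq] using (hgrowth n hn).2
  obtain ⟨D, ε, hD, hε, hVball⟩ := hV.exists_ncard_le_mul_exp hlen hfin hc₂.le hupper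
  set B := c₂ * exp (2 * |δ|)
  have hball := ncard_le_mul_exp hlen hfin hc₂.le hupper
  set η := min (δ / 2) (θ * ε / 4)
  set P := max (2 / (θ * ε / 4)) (4 * M + 2) ^ 2
  set Q := P * (B ^ 2 * D * exp (2 * δ) * exp (4 * M * δ + 2 * M * ε))
  refine of_ncard_le_mul_exp hc₁ (K := B + Q) (η := η) (by positivity) (by positivity)
    (fun n hn => (hgrowth n hn).1) fun n hn => ?_
  have hsmall : B * exp (n / 2 * δ) ≤ B * exp (-(n * η)) * exp (n * δ) := by
    rw [mul_assoc B, ← exp_add]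
    gcongr
    nlinarith [min_le_left (δ / 2) (θ * ε / 4), (Nat.cast_nonneg n : (0 : ℝ) ≤ n)]
  have hpoly : ((⌈n + 4 * M⌉₊ : ℝ) + 1) ^ 2 ≤ P * exp (θ * ε / 4 * n) :=
    calc _ ≤ ((n : ℝ) + (4 * M + 2)) ^ 2 := pow_le_pow_left₀ (by positivity)
          (by linarith [Nat.ceil_lt_add_one (a := (n : ℝ) + 4 * M) (by positivity)]) 2
      _ ≤ _ := sq_add_le_mul_exp (by positivity) (by positivity) (Nat.cast_nonneg n)
  have hlarge : ((⌈n + 4 * M⌉₊ : ℝ) + 1) ^ 2 * (B ^ 2 * D * exp (2 * δ) *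
      exp ((n + 4 * M) * δ - (θ * n / 2 - 2 * M) * ε)) ≤ Q * exp (-(n * η)) * exp (n * δ) :=
    calc _ ≤ P * exp (θ * ε / 4 * n) * (B ^ 2 * D * exp (2 * δ) *
          exp ((n + 4 * M) * δ - (θ * n / 2 - 2 * M) * ε)) := by gcongr
      _ = Q * exp (-(n * (θ * ε / 4))) * exp (n * δ) := by
          have : exp (θ * ε / 4 * n) * exp ((n + 4 * M) * δ - (θ * n / 2 - 2 * M) * ε) =
              exp (4 * M * δ + 2 * M * ε) * exp (-(n * (θ * ε / 4))) * exp (n * δ) := by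
            simp only [← exp_add]; ring_nf
          linear_combination P * B ^ 2 * D * exp (2 * δ) * this
      _ ≤ _ := by gcongr; exact min_le_right _ _
  calc _ ≤ ({g | len g ≤ n / 2}.ncard : ℝ) +
        (middleTriples len V (θ * n / 2 - 2 * M) (n + 4 * M)).ncard := by
        exact_mod_cast ncard_sep_le_ncard_add_ncard_middleTriples hlen hfin hθ.le hfact n
    _ ≤ _ := add_le_add (hball _)
        (ncard_middleTriples_le hlen hfin V (by positivity) (by positivity) hε.le hball hVball _ _)
    _ ≤ _ := add_le_add hsmall hlarge
    _ = _ := by ring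

end ExpNegligible

theorem stmt17_general {G : Type*} [Group G]
    {X : Type*} [MetricSpace X] [MulAction G X]
    (o : X)
    (hproper : ∀ R : ℝ, {g : G | dist o (g • o) ≤ R}.Finite)
    (θ M : ℝ) (hθ0 : 0 < θ) (hM : 0 < M)
    (W V : Set G)
    (hfact : ∀ g ∈ W, ∃ g₁ ghat g₂ : G, g = g₁ * ghat * g₂ ∧
      |dist o (g • o) - dist o (g₁ • o) - dist o (g₂ • o) - dist o (ghat • o)|
        ≤ 4 * M ∧
      ghat ∈ V ∧
      θ * dist o (g • o) - 2 * M ≤ dist o (ghat • o))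
    (δ : ℝ) (hδ : 0 < δ)
    (c₁ c₂ : ℝ) (hc₁ : 0 < c₁) (hc₂ : 0 < c₂)
    (hgrowth : ∀ n : ℕ, 1 ≤ n →
      c₁ * Real.exp (n * δ) ≤ (Nat.card {g : G | dist o (g • o) ≤ (n : ℝ)} : ℝ) ∧
      (Nat.card {g : G | dist o (g • o) ≤ (n : ℝ)} : ℝ) ≤ c₂ * Real.exp (n * δ))
    (c lam : ℝ) (hc : 0 < c) (hlam0 : 0 < lam) (hlam1 : lam < 1)
    (hVneg : ∀ n : ℕ, 1 ≤ n →
      (Nat.card {g : G | g ∈ V ∧ dist o (g • o) ≤ (n : ℝ)} : ℝ) ≤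
        c * lam ^ n * (Nat.card {g : G | dist o (g • o) ≤ (n : ℝ)} : ℝ)) :
    ∃ c' lam' : ℝ, 0 < c' ∧ 0 < lam' ∧ lam' < 1 ∧
      ∀ n : ℕ, 1 ≤ n →
        (Nat.card {g : G | g ∈ W ∧ dist o (g • o) ≤ (n : ℝ)} : ℝ) ≤
          c' * lam' ^ n * (Nat.card {g : G | dist o (g • o) ≤ (n : ℝ)} : ℝ) :=
  ExpNegligible.of_factorization (len := fun g => dist o (g • o)) (fun _ => dist_nonneg) hproper
    hθ0 hM.le hfact hδ hc₁ hc₂ hgrowth ⟨c, lam, hc, hlam0, hlam1, hVneg⟩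

/-- If every element of `W` factors as `g₁·ĝ·g₂` with `ĝ` in an exponentially
negligible set `V` and `d(o,ĝo) ≥ θ·d(o,go) − 2M` (lengths adding up to `4M`),
and `G` has purely exponential growth, then `W` is exponentially negligible. -/
theorem stmt17 {G : Type*} [Group G] [Countable G]
    {X : Type*} [MetricSpace X] [ProperSpace X] [MulAction G X]
    (hiso : ∀ (g : G) (x y : X), dist (g • x) (g • y) = dist x y)
    (o : X)
    (hproper : ∀ R : ℝ, {g : G | dist o (g • o) ≤ R}.Finite)
    (θ M : ℝ) (hθ0 : 0 < θ) (hθ1 : θ ≤ 1) (hM : 0 < M)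
    (W V : Set G)
    (hfact : ∀ g ∈ W, ∃ g₁ ghat g₂ : G, g = g₁ * ghat * g₂ ∧
      |dist o (g • o) - dist o (g₁ • o) - dist o (g₂ • o) - dist o (ghat • o)|
        ≤ 4 * M ∧
      ghat ∈ V ∧
      θ * dist o (g • o) - 2 * M ≤ dist o (ghat • o))
    (δ : ℝ) (hδ : 0 < δ)
    (c₁ c₂ : ℝ) (hc₁ : 0 < c₁) (hc₂ : 0 < c₂)
    (hgrowth : ∀ n : ℕ, 1 ≤ n →
      c₁ * Real.exp (n * δ) ≤ (Nat.card {g : G | dist o (g • o) ≤ (n : ℝ)} : ℝ) ∧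
      (Nat.card {g : G | dist o (g • o) ≤ (n : ℝ)} : ℝ) ≤ c₂ * Real.exp (n * δ))
    (c lam : ℝ) (hc : 0 < c) (hlam0 : 0 < lam) (hlam1 : lam < 1)
    (hVneg : ∀ n : ℕ, 1 ≤ n →
      (Nat.card {g : G | g ∈ V ∧ dist o (g • o) ≤ (n : ℝ)} : ℝ) ≤
        c * lam ^ n * (Nat.card {g : G | dist o (g • o) ≤ (n : ℝ)} : ℝ)) :
    ∃ c' lam' : ℝ, 0 < c' ∧ 0 < lam' ∧ lam' < 1 ∧
      ∀ n : ℕ, 1 ≤ n →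
        (Nat.card {g : G | g ∈ W ∧ dist o (g • o) ≤ (n : ℝ)} : ℝ) ≤
          c' * lam' ^ n * (Nat.card {g : G | dist o (g • o) ≤ (n : ℝ)} : ℝ) :=
  stmt17_general o hproper θ M hθ0 hM W V hfact δ hδ c₁ c₂ hc₁ hc₂ hgrowth c lam hc hlam0 hlam1
    hVneg
end
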